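/- Let X be a complete decomposition space (set-valued). For all p, q ≥ 0 there is a bijection Φ_p * Φ_q ≅ Φ_{p+q} over X_1; that is, the set of triples (σ, a, b) with σ ∈ X_2, a a nondegenerate p-simplex whose long edge is d_2σ, and b a nondegenerate q-simplex whose long edge is d_0σ, is in bijection with the set of nondegenerate (p+q)-simplices, compatibly with the maps to X_1 (sending (σ,a,b) to d_1σ and a (p+q)-simplex to its long edge). -/

import Mathlib

open CategoryTheory Opposite

namespace Crapo

/-- A commuting square of sets
`A → B`, `A → C`, `B → D`, `C → D` is a pullback (element-wise formulation). -/
def IsPullbackSq {A B C D : Type*} (f : A → B) (g : A → C) (h : B → D) (k : C → D) : Prop :=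
  (∀ a, h (f a) = k (g a)) ∧ ∀ b c, h b = k c → ∃! a, f a = b ∧ g a = c

/-- `[n]` as an object of the simplex category. -/
abbrev Obj (n : ℕ) : SimplexCategory := SimplexCategory.mk n

/-- The set of `n`-simplices of a simplicial set. -/
abbrev Smp (X : SSet) (n : ℕ) : Type _ := X.obj (op (Obj n))

/-- A morphism of the simplex category is *active* if it preserves endpoints. -/
def IsActive {x y : SimplexCategory} (φ : x ⟶ y) : Prop :=
  φ.toOrderHom 0 = 0 ∧ φ.toOrderHom (Fin.last x.len) = Fin.last y.len

/-- A morphism of the simplex category is *inert* if it is distance preserving. -/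
def IsInert {x y : SimplexCategory} (φ : x ⟶ y) : Prop :=
  ∀ i : Fin x.len, (φ.toOrderHom i.succ : ℕ) = (φ.toOrderHom i.castSucc : ℕ) + 1

/-- The inert inclusion `[m] ↣ [n]` sending `0` to `a`. -/
def iota (m : ℕ) {n : ℕ} (a : ℕ) (h : a + m ≤ n) : Obj m ⟶ Obj n :=
  SimplexCategory.mkHom
    ⟨fun j => ⟨a + j.1, by have := j.2; omega⟩,
     fun p q hpq => by
      simp only [Fin.mk_le_mk]
      have : p.1 ≤ q.1 := hpq
      omega⟩

/-- The `i`-th principal edge `ρ_i : [1] ↣ [k]` (an inert map). -/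
def rho {k : ℕ} (i : Fin k) : Obj 1 ⟶ Obj k :=
  iota 1 i.1 (by have := i.2; omega)

/-- The unique active map `[1] → [n]`. -/
def longMap (n : ℕ) : Obj 1 ⟶ Obj n :=
  SimplexCategory.mkHom
    ⟨fun j => ⟨j.1 * n, by
        have h : j.1 ≤ 1 := Nat.lt_succ_iff.mp j.2
        have : j.1 * n ≤ 1 * n := Nat.mul_le_mul_right n h
        omega⟩,
     fun p q hpq => by
      simp only [Fin.mk_le_mk]
      exact Nat.mul_le_mul_right n hpq⟩

/-- The long edge of an `n`-simplex. -/
def longEdge (X : SSet) (n : ℕ) (σ : Smp X n) : Smp X 1 := X.map (longMap n).op σ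

/-- The vertex map `[0] → [n]` picking out vertex `i`. -/
def vmap {n : ℕ} (i : Fin (n + 1)) : Obj 0 ⟶ Obj n :=
  SimplexCategory.mkHom ⟨fun _ => i, fun _ _ _ => le_refl _⟩

lemma vmap_comp {n m : ℕ} (j : Fin (n + 1)) (φ : Obj n ⟶ Obj m) :
    vmap j ≫ φ = vmap (φ.toOrderHom j) := by
  apply SimplexCategory.Hom.ext
  apply OrderHom.ext
  funext z
  rfl

/-- The source vertex of an edge. -/
def edgeSrc (X : SSet) : Smp X 1 → Smp X 0 := X.map (vmap (0 : Fin 2)).op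

/-- The target vertex of an edge. -/
def edgeTgt (X : SSet) : Smp X 1 → Smp X 0 := X.map (vmap (1 : Fin 2)).op

/-- Nondegeneracy of a simplex: it is not in the image of any degeneracy map. -/
def Nondeg (X : SSet) : ∀ n : ℕ, Smp X n → Prop
  | 0 => fun _ => True
  | m + 1 => fun σ =>
      ∀ (i : Fin (m + 1)) (τ : Smp X m), X.map (SimplexCategory.σ i).op τ ≠ σ

/-- A (set-valued) decomposition space: pushouts in `Δ` of active maps along
inert maps are sent to pullbacks of sets. -/
def DecompositionSpace (X : SSet) : Prop :=
  ∀ {a b c d : SimplexCategory} (f : a ⟶ b) (g : a ⟶ c) (h : b ⟶ d) (i : c ⟶ d),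
    IsActive f → IsInert g → IsPushout f g h i →
    IsPullbackSq (X.map h.op) (X.map i.op) (X.map f.op) (X.map g.op)

/-- A simplicial set is complete if `s₀ : X₀ → X₁` is injective. -/
def CompleteS (X : SSet) : Prop :=
  Function.Injective (X.map (SimplexCategory.σ (0 : Fin 1)).op : Smp X 0 → Smp X 1)

/-- A simplicial map is *ikeo* if for every active `α : [k] → [n]`, with
inert-active factorisations `ρ_i ≫ α = β_i ≫ γ_i`, the square with horizontal
maps `(γ_1,…,γ_k)*` and vertical maps induced by `f` is a pullback of sets. -/
def Ikeo {Y X : SSet} (f : Y ⟶ X) : Prop :=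
  ∀ (k n : ℕ) (α : Obj k ⟶ Obj n), IsActive α →
    ∀ (ns : Fin k → ℕ) (γ : ∀ i, Obj (ns i) ⟶ Obj n) (β : ∀ i, Obj 1 ⟶ Obj (ns i)),
      (∀ i, IsInert (γ i)) → (∀ i, IsActive (β i)) →
      (∀ i, rho i ≫ α = β i ≫ γ i) →
      IsPullbackSq
        (fun σ i => Y.map (γ i).op σ)
        (f.app (op (Obj n)))
        (fun v i => f.app (op (Obj (ns i))) (v i))
        (fun σ i => X.map (γ i).op σ)

/-- A simplicial map is *semi-ikeo* if the ikeo condition holds for every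
*injective* active `α : [k] → [n]` with `k ≥ 1`. -/
def SemiIkeo {Y X : SSet} (f : Y ⟶ X) : Prop :=
  ∀ (k n : ℕ), 1 ≤ k → ∀ (α : Obj k ⟶ Obj n), IsActive α →
    Function.Injective α.toOrderHom →
    ∀ (ns : Fin k → ℕ) (γ : ∀ i, Obj (ns i) ⟶ Obj n) (β : ∀ i, Obj 1 ⟶ Obj (ns i)),
      (∀ i, IsInert (γ i)) → (∀ i, IsActive (β i)) →
      (∀ i, rho i ≫ α = β i ≫ γ i) →
      IsPullbackSq
        (fun σ i => Y.map (γ i).op σ)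
        (f.app (op (Obj n)))
        (fun v i => f.app (op (Obj (ns i))) (v i))
        (fun σ i => X.map (γ i).op σ)

/-- The iterated fibre product `X₁ ×_{X₀} ⋯ ×_{X₀} X₁` (`n` factors). -/
def SegalSet (X : SSet) (n : ℕ) : Type _ :=
  { v : Fin n → Smp X 1 //
    ∀ (i : Fin n) (h : i.1 + 1 < n), edgeTgt X (v i) = edgeSrc X (v ⟨i.1 + 1, h⟩) }

/-- The Segal map `X_n → X₁ ×_{X₀} ⋯ ×_{X₀} X₁`. -/
def segalMap (X : SSet) (n : ℕ) (σ : Smp X n) : SegalSet X n :=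
  ⟨fun i => X.map (rho i).op σ, by
    intro i h
    show X.map (vmap (1 : Fin 2)).op (X.map (rho i).op σ) =
      X.map (vmap (0 : Fin 2)).op (X.map (rho ⟨i.1 + 1, h⟩).op σ)
    rw [← FunctorToTypes.map_comp_apply, ← FunctorToTypes.map_comp_apply,
      ← op_comp, ← op_comp, vmap_comp, vmap_comp]
    have e : (SimplexCategory.Hom.toOrderHom (rho i)) 1 =
        (SimplexCategory.Hom.toOrderHom (rho ⟨i.1 + 1, h⟩)) 0 := by
      apply Fin.ext
      simp [rho, iota]
      rfl
    rw [e]⟩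

/-- The map on iterated fibre products induced by a simplicial map. -/
def segalInduced {Y X : SSet} (f : Y ⟶ X) (n : ℕ) : SegalSet Y n → SegalSet X n :=
  fun v => ⟨fun i => f.app (op (Obj 1)) (v.1 i), by
    intro i h
    show X.map (vmap (1 : Fin 2)).op (f.app (op (Obj 1)) (v.1 i)) =
      X.map (vmap (0 : Fin 2)).op (f.app (op (Obj 1)) (v.1 ⟨i.1 + 1, h⟩))
    rw [← FunctorToTypes.naturality, ← FunctorToTypes.naturality]
    exact congrArg (f.app (op (Obj 0))) (v.2 i h)⟩

/-- A simplicial map is *inner Kan* (relatively Segal) if for each `n ≥ 2` the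
square comparing the Segal maps is a pullback of sets. -/
def InnerKan {Y X : SSet} (f : Y ⟶ X) : Prop :=
  ∀ n : ℕ, 2 ≤ n →
    IsPullbackSq (segalMap Y n) (f.app (op (Obj n))) (segalInduced f n) (segalMap X n)

/-- A simplicial map is *fully faithful* if for each `n` the square formed by
the vertex maps is a pullback of sets. -/
def FullyFaithfulMap {Y X : SSet} (f : Y ⟶ X) : Prop :=
  ∀ n : ℕ,
    IsPullbackSq
      (fun (σ : Smp Y n) (i : Fin (n + 1)) => Y.map (vmap i).op σ)
      (f.app (op (Obj n)))
      (fun v i => f.app (op (Obj 0)) (v i))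
      (fun (σ : Smp X n) (i : Fin (n + 1)) => X.map (vmap i).op σ)

/-- A *full inclusion*: a fully faithful simplicial map, injective on `0`-simplices. -/
def FullIncl {Y X : SSet} (f : Y ⟶ X) : Prop :=
  FullyFaithfulMap f ∧ Function.Injective (f.app (op (Obj 0)))

/-- A simplicial map is *culf* if its naturality square at every active map is
a pullback of sets. -/
def Culf {K X : SSet} (g : K ⟶ X) : Prop :=
  ∀ (m n : ℕ) (α : Obj m ⟶ Obj n), IsActive α →
    IsPullbackSq (K.map α.op) (g.app (op (Obj n))) (g.app (op (Obj m))) (X.map α.op)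

/-- A simplicial map is *convex* if it is a full inclusion and culf. -/
def Convex {K X : SSet} (g : K ⟶ X) : Prop := FullIncl g ∧ Culf g

/-- `Φ_n`: the set of nondegenerate `n`-simplices. -/
def Phi (X : SSet) (n : ℕ) : Type _ := { σ : Smp X n // Nondeg X n σ }

/-- The structure map of the functional `Φ_n`: the long edge. -/
def phiEdge (X : SSet) (n : ℕ) (a : Phi X n) : Smp X 1 := longEdge X n a.1

/-- Binary convolution of two linear functionals. -/
def Conv2 (X : SSet) {A B : Type*} (pa : A → Smp X 1) (pb : B → Smp X 1) : Type _ :=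
  { t : Smp X 2 × A × B //
    pa t.2.1 = X.map (rho (0 : Fin 2)).op t.1 ∧
    pb t.2.2 = X.map (rho (1 : Fin 2)).op t.1 }

/-- The structure map of a binary convolution. -/
def conv2Edge (X : SSet) {A B : Type*} {pa : A → Smp X 1} {pb : B → Smp X 1}
    (t : Conv2 X pa pb) : Smp X 1 := longEdge X 2 t.1.1

/-- Ternary convolution of three linear functionals. -/
def Conv3 (X : SSet) {A B C : Type*} (pa : A → Smp X 1) (pb : B → Smp X 1)
    (pc : C → Smp X 1) : Type _ :=
  { t : Smp X 3 × A × B × C //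
    pa t.2.1 = X.map (rho (0 : Fin 3)).op t.1 ∧
    pb t.2.2.1 = X.map (rho (1 : Fin 3)).op t.1 ∧
    pc t.2.2.2 = X.map (rho (2 : Fin 3)).op t.1 }

/-- The structure map of a ternary convolution. -/
def conv3Edge (X : SSet) {A B C : Type*} {pa : A → Smp X 1} {pb : B → Smp X 1}
    {pc : C → Smp X 1} (t : Conv3 X pa pb pc) : Smp X 1 := longEdge X 3 t.1.1

/-- `Φ_m^K` as a functional on `X`: nondegenerate `m`-simplices of `K` with
structure map the long edge, viewed in `X₁`. -/
def phiK {K X : SSet} (g : K ⟶ X) (m : ℕ) (a : Phi K m) : Smp X 1 :=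
  g.app (op (Obj 1)) (phiEdge K m a)

/-- `Φ_p^{∉K}`: nondegenerate `p`-simplices of `X` none of whose principal
edges lies in `K`. -/
def PhiNotK {K X : SSet} (g : K ⟶ X) (p : ℕ) : Type _ :=
  { σ : Smp X p // Nondeg X p σ ∧
      ∀ i : Fin p, X.map (rho i).op σ ∉ Set.range (g.app (op (Obj 1))) }

/-- The structure map of `Φ_p^{∉K}`. -/
def notKEdge {K X : SSet} (g : K ⟶ X) (p : ℕ) (a : PhiNotK g p) : Smp X 1 :=
  longEdge X p a.1

/-- `Φ_n^{∩K}`: nondegenerate `n`-simplices of `X` with at least one vertex in `K`. -/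
def PhiCap {K X : SSet} (g : K ⟶ X) (n : ℕ) : Type _ :=
  { σ : Smp X n // Nondeg X n σ ∧
      ∃ i : Fin (n + 1), X.map (vmap i).op σ ∈ Set.range (g.app (op (Obj 0))) }

/-- The structure map of `Φ_n^{∩K}`. -/
def capEdge {K X : SSet} (g : K ⟶ X) (n : ℕ) (a : PhiCap g n) : Smp X 1 :=
  longEdge X n a.1

/-- `Φ_n^{X∖K}`: nondegenerate `n`-simplices of `X` none of whose vertices lies
in `K` (i.e. nondegenerate simplices of the full hull of `X₀ ∖ K₀`). -/
def PhiComp {K X : SSet} (g : K ⟶ X) (n : ℕ) : Type _ :=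
  { σ : Smp X n // Nondeg X n σ ∧
      ∀ i : Fin (n + 1), X.map (vmap i).op σ ∉ Set.range (g.app (op (Obj 0))) }

/-- The structure map of `Φ_n^{X∖K}`. -/
def compEdge {K X : SSet} (g : K ⟶ X) (n : ℕ) (a : PhiComp g n) : Smp X 1 :=
  longEdge X n a.1

/-- `Φ_even`. -/
def PhiEven (X : SSet) : Type _ := Σ n : { n : ℕ // Even n }, Phi X n.1

/-- The structure map of `Φ_even`. -/
def evenEdge (X : SSet) (a : PhiEven X) : Smp X 1 := phiEdge X a.1.1 a.2

/-- `Φ_odd`. -/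
def PhiOdd (X : SSet) : Type _ := Σ n : { n : ℕ // Odd n }, Phi X n.1

/-- The structure map of `Φ_odd`. -/
def oddEdge (X : SSet) (a : PhiOdd X) : Smp X 1 := phiEdge X a.1.1 a.2

/-- `Φ_even^{X∖K}`. -/
def PhiCompEven {K X : SSet} (g : K ⟶ X) : Type _ :=
  Σ n : { n : ℕ // Even n }, PhiComp g n.1

/-- The structure map of `Φ_even^{X∖K}`. -/
def compEvenEdge {K X : SSet} (g : K ⟶ X) (a : PhiCompEven g) : Smp X 1 :=
  compEdge g a.1.1 a.2

/-- `Φ_odd^{X∖K}`. -/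
def PhiCompOdd {K X : SSet} (g : K ⟶ X) : Type _ :=
  Σ n : { n : ℕ // Odd n }, PhiComp g n.1

/-- The structure map of `Φ_odd^{X∖K}`. -/
def compOddEdge {K X : SSet} (g : K ⟶ X) (a : PhiCompOdd g) : Smp X 1 :=
  compEdge g a.1.1 a.2


-- ### basic lemmas

lemma homext {x y : SimplexCategory} {φ ψ : x ⟶ y}
    (h : ∀ k, (φ.toOrderHom k : ℕ) = (ψ.toOrderHom k : ℕ)) : φ = ψ := by
  apply SimplexCategory.Hom.ext
  apply OrderHom.ext
  funext k
  exact Fin.ext (h k)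

lemma comp_val {x y z : SimplexCategory} (φ : x ⟶ y) (ψ : y ⟶ z) (k) :
    ((φ ≫ ψ).toOrderHom k : ℕ) = (ψ.toOrderHom (φ.toOrderHom k) : ℕ) := rfl

lemma iota_val (m : ℕ) {n : ℕ} (a : ℕ) (h : a + m ≤ n) (k : Fin (m+1)) :
    ((iota m a h).toOrderHom k : ℕ) = a + k.1 := rfl

lemma longMap_val (n : ℕ) (k : Fin 2) : ((longMap n).toOrderHom k : ℕ) = k.1 * n := rfl

lemma sigma_val {n : ℕ} (i : Fin (n+1)) (k : Fin (n+2)) :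
    ((SimplexCategory.σ i).toOrderHom k : ℕ) = if i.1 < k.1 then k.1 - 1 else k.1 := by
  show (Fin.predAbove i k : ℕ) = _
  unfold Fin.predAbove
  rcases Nat.lt_or_ge i.1 k.1 with h | h
  · rw [dif_pos (show i.castSucc < k from by rw [Fin.lt_def]; simpa using h), if_pos h]
    exact Fin.coe_pred _ _
  · rw [dif_neg (show ¬ i.castSucc < k from by rw [Fin.lt_def]; simpa using Nat.not_lt.mpr h),
      if_neg (Nat.not_lt.mpr h)]
    exact Fin.coe_castPred _ _

lemma iota_inert (m : ℕ) {n : ℕ} (a : ℕ) (h : a + m ≤ n) : IsInert (iota m a h) := by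
  intro i
  show ((iota m a h).toOrderHom i.succ : ℕ) = _
  rw [iota_val, iota_val]
  simp [Fin.val_succ]
  omega

lemma longMap_active (n : ℕ) : IsActive (longMap n) := by
  constructor
  · exact Fin.ext (show (0 : Fin 2).1 * n = (0 : Fin (n+1)).1 by simp)
  · exact Fin.ext (show (Fin.last 1).1 * n = (Fin.last n).1 by simp [Fin.val_last])

lemma sigma_active {n : ℕ} (i : Fin (n+1)) : IsActive (SimplexCategory.σ i) := by
  constructor
  · exact Fin.ext (by rw [sigma_val]; simp)
  · exact Fin.ext (by rw [sigma_val]; simp [Fin.last]; omega)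

-- ### the glue map

/-- auxiliary bounded index -/
def finmin (v a m : ℕ) : Fin (m + 1) := ⟨min (v - a) m, Nat.lt_succ_of_le (min_le_right _ _)⟩

/-- value function of the glue map -/
def glueV (m m' a : ℕ) (f : Obj m ⟶ Obj m') (v : ℕ) : ℕ :=
  if v ≤ a then v
  else if v ≤ a + m then a + ((f.toOrderHom (finmin v a m)) : ℕ)
  else v - m + m'

lemma fval_le (m m' : ℕ) (f : Obj m ⟶ Obj m') (x : Fin (m+1)) :
    ((f.toOrderHom x) : ℕ) ≤ m' := Nat.lt_succ_iff.mp (f.toOrderHom x).2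

lemma glueV_le (m m' a : ℕ) {n n' : ℕ} (hmn : a + m ≤ n) (hd : n' + m = n + m')
    (f : Obj m ⟶ Obj m') {v : ℕ} (hv : v ≤ n) : glueV m m' a f v ≤ n' := by
  have hb := fval_le m m' f (finmin v a m)
  unfold glueV
  split_ifs <;> omega

lemma glueV_mono (m m' a : ℕ) (f : Obj m ⟶ Obj m') {v w : ℕ} (hvw : v ≤ w) :
    glueV m m' a f v ≤ glueV m m' a f w := by
  have hb1 := fval_le m m' f (finmin v a m)
  have hb2 := fval_le m m' f (finmin w a m)
  have hmono : ((f.toOrderHom (finmin v a m)) : ℕ) ≤ ((f.toOrderHom (finmin w a m)) : ℕ) :=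
    f.toOrderHom.monotone (show (finmin v a m) ≤ (finmin w a m) from by
      simp only [finmin, Fin.mk_le_mk]; omega)
  unfold glueV
  split_ifs <;> omega

/-- The pushout of an arbitrary map `f : [m] → [m']` along the inert `iota m a`. -/
def glue (m m' a : ℕ) {n n' : ℕ} (hmn : a + m ≤ n) (hd : n' + m = n + m')
    (f : Obj m ⟶ Obj m') : Obj n ⟶ Obj n' :=
  SimplexCategory.mkHom
    ⟨fun k => ⟨glueV m m' a f k.1, Nat.lt_succ_of_le (glueV_le m m' a hmn hd f (Nat.lt_succ_iff.mp k.2))⟩,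
     fun v w hvw => glueV_mono m m' a f (show v.1 ≤ w.1 from hvw)⟩

lemma glue_val (m m' a : ℕ) {n n' : ℕ} (hmn : a + m ≤ n) (hd : n' + m = n + m')
    (f : Obj m ⟶ Obj m') (k : Fin (n+1)) :
    ((glue m m' a hmn hd f).toOrderHom k : ℕ) = glueV m m' a f k.1 := rfl

-- ### order-hom helpers

lemma oh_congr {x y : SimplexCategory} (φ : x ⟶ y) {i j : Fin (x.len+1)} (h : i.1 = j.1) :
    (φ.toOrderHom i : ℕ) = (φ.toOrderHom j : ℕ) := by rw [Fin.ext h]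

lemma oh_mono {x y : SimplexCategory} (φ : x ⟶ y) {i j : Fin (x.len+1)} (h : i.1 ≤ j.1) :
    (φ.toOrderHom i : ℕ) ≤ (φ.toOrderHom j : ℕ) := φ.toOrderHom.monotone h

-- ### the descent map for the pushout

section Desc

variable (m m' a : ℕ) {n n' : ℕ} {e : SimplexCategory}

/-- candidate value function for the map out of the pushout -/
def descV (u : Obj m' ⟶ e) (v : Obj n ⟶ e) (w : ℕ) : ℕ :=
  if w < a then (v.toOrderHom ⟨min w n, Nat.lt_succ_of_le (min_le_right _ _)⟩ : ℕ)
  else if w ≤ a + m' then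
    (u.toOrderHom ⟨min (w - a) m', Nat.lt_succ_of_le (min_le_right _ _)⟩ : ℕ)
  else (v.toOrderHom ⟨min (w - m' + m) n, Nat.lt_succ_of_le (min_le_right _ _)⟩ : ℕ)

lemma descV_lt (u : Obj m' ⟶ e) (v : Obj n ⟶ e) (w : ℕ) :
    descV m m' a u v w < e.len + 1 := by
  unfold descV; split_ifs <;> exact Fin.is_lt _

variable (hmn : a + m ≤ n) (hd : n' + m = n + m')
variable (f : Obj m ⟶ Obj m') (u : Obj m' ⟶ e) (v : Obj n ⟶ e)

lemma desc_key (hcond : f ≫ u = iota m a hmn ≫ v) (x : Fin (m+1)) :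
    (u.toOrderHom (f.toOrderHom x) : ℕ) = (v.toOrderHom (⟨a + x.1, Nat.lt_succ_of_le (le_trans (Nat.add_le_add_left (Nat.lt_succ_iff.mp x.2) a) hmn)⟩ : Fin (n+1)) : ℕ) := by
  have h := congrArg (fun (ψ : Obj m ⟶ e) => ((ψ.toOrderHom x : Fin (e.len+1)) : ℕ)) hcond
  exact h

lemma desc_key0 (hf : IsActive f) (hcond : f ≫ u = iota m a hmn ≫ v) :
    (u.toOrderHom 0 : ℕ) = (v.toOrderHom (⟨a, Nat.lt_succ_of_le (le_trans (Nat.le_add_right a m) hmn)⟩ : Fin (n+1)) : ℕ) := by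
  have h := desc_key m m' a hmn f u v hcond 0
  have h1 : f.toOrderHom 0 = (0 : Fin (m'+1)) := hf.1
  rw [h1] at h
  rw [h]
  exact oh_congr v (by simp)

lemma desc_keyL (hf : IsActive f) (hcond : f ≫ u = iota m a hmn ≫ v) :
    (u.toOrderHom (Fin.last m') : ℕ) = (v.toOrderHom (⟨a + m, Nat.lt_succ_of_le hmn⟩ : Fin (n+1)) : ℕ) := by
  have h := desc_key m m' a hmn f u v hcond (Fin.last m)
  have h2 : f.toOrderHom (Fin.last m) = Fin.last m' := hf.2
  rw [h2] at h
  rw [h]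
  exact oh_congr v (by simp [Fin.val_last])

lemma descV_mono (hf : IsActive f) (hcond : f ≫ u = iota m a hmn ≫ v)
    {w₁ w₂ : ℕ} (h12 : w₁ ≤ w₂) (hw2 : w₂ ≤ n') :
    descV m m' a u v w₁ ≤ descV m m' a u v w₂ := by
  have k0 := desc_key0 m m' a hmn f u v hf hcond
  have kL := desc_keyL m m' a hmn f u v hf hcond
  unfold descV
  split_ifs with h1 h2 h3 h4 h5 h6
  · exact oh_mono v (by simp only [Fin.val_mk]; omega)
  · calc (v.toOrderHom ⟨min w₁ n, Nat.lt_succ_of_le (min_le_right _ _)⟩ : ℕ)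
        ≤ (v.toOrderHom (⟨a, Nat.lt_succ_of_le (le_trans (Nat.le_add_right a m) hmn)⟩ : Fin (n+1)) : ℕ) :=
          oh_mono v (by simp only [Fin.val_mk]; omega)
      _ = (u.toOrderHom 0 : ℕ) := k0.symm
      _ ≤ (u.toOrderHom ⟨min (w₂ - a) m', Nat.lt_succ_of_le (min_le_right _ _)⟩ : ℕ) :=
          oh_mono u (by simp only [Fin.val_mk, Fin.val_zero]; omega)
  · exact oh_mono v (by simp only [Fin.val_mk]; omega)
  · omega
  · exact oh_mono u (by simp only [Fin.val_mk]; omega)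
  · calc (u.toOrderHom ⟨min (w₁ - a) m', Nat.lt_succ_of_le (min_le_right _ _)⟩ : ℕ)
        ≤ (u.toOrderHom (Fin.last m') : ℕ) := oh_mono u (by simp only [Fin.val_mk, Fin.val_last]; omega)
      _ = (v.toOrderHom (⟨a + m, Nat.lt_succ_of_le hmn⟩ : Fin (n+1)) : ℕ) := kL
      _ ≤ (v.toOrderHom ⟨min (w₂ - m' + m) n, Nat.lt_succ_of_le (min_le_right _ _)⟩ : ℕ) :=
          oh_mono v (by simp only [Fin.val_mk]; omega)
  · omega
  · omega
  · exact oh_mono v (by simp only [Fin.val_mk]; omega)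

/-- the descent map out of the pushout -/
def descHom (hf : IsActive f) (hcond : f ≫ u = iota m a hmn ≫ v) : Obj n' ⟶ e :=
  SimplexCategory.Hom.mk
    ⟨fun k => ⟨descV m m' a u v k.1, descV_lt m m' a u v k.1⟩,
     fun k₁ k₂ h => descV_mono m m' a hmn f u v hf hcond
        (show k₁.1 ≤ k₂.1 from h) (Nat.lt_succ_iff.mp k₂.2)⟩

lemma descHom_val (hf : IsActive f) (hcond : f ≫ u = iota m a hmn ≫ v) (k : Fin (n'+1)) :
    ((descHom m m' a hmn f u v hf hcond).toOrderHom k : ℕ) = descV m m' a u v k.1 := rfl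

end Desc

-- ### the pushout lemma

lemma glue_comm (m m' a : ℕ) {n n' : ℕ} (hmn : a + m ≤ n) (hd : n' + m = n + m')
    (f : Obj m ⟶ Obj m') (hf : IsActive f) :
    f ≫ iota m' a (by omega) = iota m a hmn ≫ glue m m' a hmn hd f := by
  apply homext; intro k
  rw [comp_val, comp_val, iota_val, glue_val]
  have hk : k.1 ≤ m := Nat.lt_succ_iff.mp k.2
  show a + (f.toOrderHom k : ℕ) = glueV m m' a f ((iota m a hmn).toOrderHom k : ℕ)
  rw [iota_val]
  unfold glueV
  split_ifs with h1 h2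
  · -- a + k.1 ≤ a, so k = 0
    have hk0 : k = 0 := Fin.ext (by simp only [Fin.val_zero]; omega)
    subst hk0
    have h0 : f.toOrderHom 0 = (0 : Fin (m'+1)) := hf.1
    rw [h0]
    simp
  · have hfm : finmin (a + k.1) a m = k := Fin.ext (by simp only [finmin, Fin.val_mk]; omega)
    rw [hfm]
  · omega

set_option maxHeartbeats 1600000 in
lemma glue_isPushout (m m' a : ℕ) {n n' : ℕ} (hmn : a + m ≤ n) (hd : n' + m = n + m')
    (f : Obj m ⟶ Obj m') (hf : IsActive f) :
    IsPushout f (iota m a hmn) (iota m' a (by omega)) (glue m m' a hmn hd f) := by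
  refine IsPushout.of_isColimit' ⟨glue_comm m m' a hmn hd f hf⟩ ?_
  refine Limits.PushoutCocone.IsColimit.mk _
    (fun s => descHom m m' a hmn f s.inl s.inr hf s.condition) ?_ ?_ ?_
  · -- fac_left : iota m' a ≫ desc = s.inl
    intro s
    apply homext; intro k
    have hk : k.1 ≤ m' := Nat.lt_succ_iff.mp k.2
    rw [comp_val, descHom_val]
    show descV m m' a s.inl s.inr ((iota m' a _).toOrderHom k : ℕ) = _
    rw [iota_val]
    unfold descV
    rw [if_neg (by omega), if_pos (by omega)]
    exact oh_congr s.inl (by simp only [Fin.val_mk]; omega)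
  · -- fac_right : glue ≫ desc = s.inr
    intro s
    have key := desc_key m m' a hmn f s.inl s.inr s.condition
    apply homext; intro k
    rw [comp_val, descHom_val]
    show descV m m' a s.inl s.inr ((glue m m' a hmn hd f).toOrderHom k : ℕ) = _
    rw [glue_val]
    have hk : k.1 ≤ n := Nat.lt_succ_iff.mp k.2
    have hb := fval_le m m' f (finmin k.1 a m)
    unfold glueV
    split_ifs with h1 h2
    · -- k.1 ≤ a
      unfold descV
      split_ifs with g1 g2
      · exact oh_congr s.inr (by simp only [Fin.val_mk]; omega)
      · -- k.1 = a
        have k0 := desc_key0 m m' a hmn f s.inl s.inr hf s.condition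
        calc (s.inl.toOrderHom ⟨min (k.1 - a) m', Nat.lt_succ_of_le (min_le_right _ _)⟩ : ℕ)
            = (s.inl.toOrderHom 0 : ℕ) := oh_congr s.inl (by simp only [Fin.val_mk, Fin.val_zero]; omega)
          _ = (s.inr.toOrderHom (⟨a, Nat.lt_succ_of_le (le_trans (Nat.le_add_right a m) hmn)⟩ : Fin (n+1)) : ℕ) := k0
          _ = (s.inr.toOrderHom k : ℕ) := oh_congr s.inr (by simp only [Fin.val_mk]; omega)
      · omega
    · -- a < k.1 ≤ a + m
      unfold descV
      rw [if_neg (by omega), if_pos (by omega)]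
      calc (s.inl.toOrderHom ⟨min (a + (f.toOrderHom (finmin k.1 a m) : ℕ) - a) m', Nat.lt_succ_of_le (min_le_right _ _)⟩ : ℕ)
          = (s.inl.toOrderHom (f.toOrderHom (finmin k.1 a m)) : ℕ) :=
            oh_congr s.inl (by simp only [Fin.val_mk]; omega)
        _ = (s.inr.toOrderHom (⟨a + (finmin k.1 a m).1, Nat.lt_succ_of_le (le_trans (Nat.add_le_add_left (Nat.lt_succ_iff.mp (finmin k.1 a m).2) a) hmn)⟩ : Fin (n+1)) : ℕ) := key (finmin k.1 a m)
        _ = (s.inr.toOrderHom k : ℕ) := oh_congr s.inr (by simp only [Fin.val_mk, finmin]; omega)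
    · -- k.1 > a + m
      unfold descV
      rw [if_neg (by omega), if_neg (by omega)]
      exact oh_congr s.inr (by simp only [Fin.val_mk]; omega)
  · -- uniqueness
    intro s t hl hr
    apply homext; intro k
    rw [descHom_val]
    have hk : k.1 ≤ n' := Nat.lt_succ_iff.mp k.2
    rcases Nat.lt_or_ge k.1 a with h1 | h1
    · -- k.1 < a
      have hj : (glue m m' a hmn hd f).toOrderHom (⟨k.1, by omega⟩ : Fin (n+1)) = k := by
        apply Fin.ext
        rw [glue_val]
        show glueV m m' a f k.1 = k.1
        unfold glueV
        rw [if_pos (by omega)]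
      calc (t.toOrderHom k : ℕ)
          = (t.toOrderHom ((glue m m' a hmn hd f).toOrderHom (⟨k.1, by omega⟩ : Fin (n+1))) : ℕ) := by rw [hj]
        _ = ((glue m m' a hmn hd f ≫ t).toOrderHom (⟨k.1, by omega⟩ : Fin (n+1)) : ℕ) :=
            (comp_val (glue m m' a hmn hd f) t _).symm
        _ = (s.inr.toOrderHom (⟨k.1, by omega⟩ : Fin (n+1)) : ℕ) := by rw [hr]
        _ = descV m m' a s.inl s.inr k.1 := by
            unfold descV
            rw [if_pos h1]
            exact oh_congr s.inr (by simp only [Fin.val_mk]; omega)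
    · rcases le_or_gt k.1 (a + m') with h2 | h2
      · -- a ≤ k.1 ≤ a + m'
        have hj : (iota m' a (show a + m' ≤ n' by omega)).toOrderHom (⟨k.1 - a, by omega⟩ : Fin (m'+1)) = k :=
          Fin.ext (by rw [iota_val]; simp only [Fin.val_mk]; omega)
        calc (t.toOrderHom k : ℕ)
            = (t.toOrderHom ((iota m' a (show a + m' ≤ n' by omega)).toOrderHom (⟨k.1 - a, by omega⟩ : Fin (m'+1))) : ℕ) := by rw [hj]
          _ = ((iota m' a (show a + m' ≤ n' by omega) ≫ t).toOrderHom (⟨k.1 - a, by omega⟩ : Fin (m'+1)) : ℕ) :=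
              (comp_val (iota m' a (show a + m' ≤ n' by omega)) t _).symm
          _ = (s.inl.toOrderHom (⟨k.1 - a, by omega⟩ : Fin (m'+1)) : ℕ) := by rw [hl]
          _ = descV m m' a s.inl s.inr k.1 := by
              unfold descV
              rw [if_neg (by omega), if_pos (by omega)]
              exact oh_congr s.inl (by simp only [Fin.val_mk]; omega)
      · -- k.1 > a + m'
        have hj : (glue m m' a hmn hd f).toOrderHom (⟨k.1 - m' + m, by omega⟩ : Fin (n+1)) = k := by
          apply Fin.ext
          rw [glue_val]
          show glueV m m' a f (k.1 - m' + m) = k.1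
          unfold glueV
          rw [if_neg (by omega), if_neg (by omega)]
          omega
        calc (t.toOrderHom k : ℕ)
            = (t.toOrderHom ((glue m m' a hmn hd f).toOrderHom (⟨k.1 - m' + m, by omega⟩ : Fin (n+1))) : ℕ) := by rw [hj]
          _ = ((glue m m' a hmn hd f ≫ t).toOrderHom (⟨k.1 - m' + m, by omega⟩ : Fin (n+1)) : ℕ) :=
              (comp_val (glue m m' a hmn hd f) t _).symm
          _ = (s.inr.toOrderHom (⟨k.1 - m' + m, by omega⟩ : Fin (n+1)) : ℕ) := by rw [hr]
          _ = descV m m' a s.inl s.inr k.1 := by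
              unfold descV
              rw [if_neg (by omega), if_neg (by omega)]
              exact oh_congr s.inr (by simp only [Fin.val_mk]; omega)


-- ### map composition helper

lemma map_comp_apply (X : SSet) {a b c : SimplexCategory} (f : a ⟶ b) (g : b ⟶ c)
    (x : X.obj (op c)) : X.map (f ≫ g).op x = X.map f.op (X.map g.op x) := by
  rw [op_comp, FunctorToTypes.map_comp_apply]

lemma rho_val {k : ℕ} (i : Fin k) (j : Fin 2) : ((rho i).toOrderHom j : ℕ) = i.1 + j.1 := rfl

-- ### nondegeneracy helpers

lemma exists_of_not_nondeg (X : SSet) {n : ℕ} (ω : Smp X n) (h : ¬ Nondeg X n ω) :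
    ∃ (m : ℕ) (_ : n = m + 1) (j : Fin (m + 1)) (z : Smp X m) (φ : Obj n ⟶ Obj m),
      (∀ k : Fin (n + 1), ((φ.toOrderHom k) : ℕ) = if j.1 < k.1 then k.1 - 1 else k.1)
      ∧ X.map φ.op z = ω := by
  cases n with
  | zero => exact absurd trivial h
  | succ m =>
    unfold Nondeg at h
    simp only [ne_eq, not_forall, Classical.not_not] at h
    obtain ⟨j, z, hz⟩ := h
    exact ⟨m, rfl, j, z, SimplexCategory.σ j, fun k => sigma_val j k, hz⟩

lemma not_nondeg_of_factor (X : SSet) {n m : ℕ} (hm : n = m + 1) (j : Fin (m + 1))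
    (φ : Obj n ⟶ Obj m)
    (hφ : ∀ k : Fin (n + 1), ((φ.toOrderHom k) : ℕ) = if j.1 < k.1 then k.1 - 1 else k.1)
    (z : Smp X m) : ¬ Nondeg X n (X.map φ.op z) := by
  subst hm
  intro hnd
  have hφσ : φ = SimplexCategory.σ j := homext fun k => by rw [hφ k, sigma_val]
  exact hnd j z (by rw [← hφσ])

/-- if both inert restrictions are nondegenerate, so is the whole simplex -/
lemma nondeg_of_restrict (X : SSet) (p q : ℕ) (ω : Smp X (p + q))
    (ha : Nondeg X p (X.map (iota p (n := p+q) 0 (by omega)).op ω))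
    (hb : Nondeg X q (X.map (iota q (n := p+q) p (by omega)).op ω)) :
    Nondeg X (p + q) ω := by
  by_contra h
  obtain ⟨m, hm, j, z, φ, hφ, hz⟩ := exists_of_not_nondeg X ω h
  rcases Nat.lt_or_ge j.1 p with hj | hj
  · obtain ⟨r, rfl⟩ : ∃ r, p = r + 1 := ⟨p - 1, by omega⟩
    have hcomp : iota (r+1) (n := (r+1)+q) 0 (by omega) ≫ φ =
        SimplexCategory.σ (⟨j.1, by omega⟩ : Fin (r+1)) ≫ iota r (n := m) 0 (by omega) := by
      apply homext; intro k
      rw [comp_val, comp_val, hφ ((iota (r+1) (n := (r+1)+q) 0 (by omega)).toOrderHom k),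
        iota_val, iota_val, sigma_val]
      simp only [Fin.val_mk]
      split_ifs <;> omega
    refine ha ⟨j.1, by omega⟩ (X.map (iota r (n := m) 0 (by omega)).op z) ?_
    rw [← map_comp_apply, ← hcomp, map_comp_apply, hz]
  · have hq : 1 ≤ q := by have := j.2; omega
    obtain ⟨r, rfl⟩ : ∃ r, q = r + 1 := ⟨q - 1, by omega⟩
    have hcomp : iota (r+1) (n := p+(r+1)) p (by omega) ≫ φ =
        SimplexCategory.σ (⟨j.1 - p, by have := j.2; omega⟩ : Fin (r+1)) ≫
          iota r (n := m) p (by omega) := by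
      apply homext; intro k
      rw [comp_val, comp_val, hφ ((iota (r+1) (n := p+(r+1)) p (by omega)).toOrderHom k),
        iota_val, iota_val, sigma_val]
      simp only [Fin.val_mk]
      split_ifs <;> omega
    refine hb ⟨j.1 - p, by have := j.2; omega⟩ (X.map (iota r (n := m) p (by omega)).op z) ?_
    rw [← map_comp_apply, ← hcomp, map_comp_apply, hz]

/-- in a decomposition space, inert restrictions of nondegenerate simplices
are nondegenerate -/
lemma nondeg_restrict (X : SSet) (hD : DecompositionSpace X) (p q : ℕ) (ω : Smp X (p + q))
    (hω : Nondeg X (p + q) ω) :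
    Nondeg X p (X.map (iota p (n := p+q) 0 (by omega)).op ω) ∧
    Nondeg X q (X.map (iota q (n := p+q) p (by omega)).op ω) := by
  constructor
  · by_contra h
    obtain ⟨m, hm, j, z, φ, hφ, hz⟩ := exists_of_not_nondeg X _ h
    subst hm
    have hφσ : φ = SimplexCategory.σ j := homext fun k => by rw [hφ k, sigma_val]
    rw [hφσ] at hz
    have PB := hD (SimplexCategory.σ j) (iota (m+1) (n := (m+1)+q) 0 (by omega))
        (iota m (n := m+q) 0 (by omega))
        (glue (m+1) m 0 (by omega) (by omega) (SimplexCategory.σ j))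
        (sigma_active j) (iota_inert _ _ _)
        (glue_isPushout (m+1) m 0 (by omega) (by omega) _ (sigma_active j))
    obtain ⟨w, ⟨-, hw2⟩, -⟩ := PB.2 z ω hz
    refine not_nondeg_of_factor X (show (m+1)+q = (m+q)+1 by omega)
      (⟨j.1, by have := j.2; omega⟩ : Fin ((m+q)+1))
      (glue (m+1) m 0 (by omega) (by omega) (SimplexCategory.σ j)) ?_ w ?_
    · intro k
      have hk : k.1 ≤ (m+1)+q := Nat.lt_succ_iff.mp k.2
      rw [glue_val]
      unfold glueV
      rw [sigma_val]
      simp only [finmin, Fin.val_mk]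
      split_ifs <;> grind
    · rw [hw2]; exact hω
  · by_contra h
    obtain ⟨m, hm, j, z, φ, hφ, hz⟩ := exists_of_not_nondeg X _ h
    subst hm
    have hφσ : φ = SimplexCategory.σ j := homext fun k => by rw [hφ k, sigma_val]
    rw [hφσ] at hz
    have PB := hD (SimplexCategory.σ j) (iota (m+1) (n := p+(m+1)) p (by omega))
        (iota m (n := p+m) p (by omega))
        (glue (m+1) m p (by omega) (by omega) (SimplexCategory.σ j))
        (sigma_active j) (iota_inert _ _ _)
        (glue_isPushout (m+1) m p (by omega) (by omega) _ (sigma_active j))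
    obtain ⟨w, ⟨-, hw2⟩, -⟩ := PB.2 z ω hz
    refine not_nondeg_of_factor X (show p+(m+1) = (p+m)+1 by omega)
      (⟨p + j.1, by have := j.2; omega⟩ : Fin ((p+m)+1))
      (glue (m+1) m p (by omega) (by omega) (SimplexCategory.σ j)) ?_ w ?_
    · intro k
      have hk : k.1 ≤ p+(m+1) := Nat.lt_succ_iff.mp k.2
      rw [glue_val]
      unfold glueV
      rw [sigma_val]
      simp only [finmin, Fin.val_mk]
      split_ifs <;> grind
    · rw [hw2]; exact hω

-- ### the two structural maps and composite identities

def I1 (p : ℕ) : Obj 2 ⟶ Obj (p+1) := glue 1 p 0 (by omega) (by omega) (longMap p)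

def I2 (p q : ℕ) : Obj (p+1) ⟶ Obj (p+q) := glue 1 q p (by omega) (by omega) (longMap q)

lemma I1_val (p : ℕ) (k : Fin 3) :
    ((I1 p).toOrderHom k : ℕ) = if k.1 = 0 then 0 else if k.1 = 1 then p else p + 1 := by
  rw [show ((I1 p).toOrderHom k : ℕ) = glueV 1 p 0 (longMap p) k.1 from rfl]
  unfold glueV
  rw [longMap_val]
  simp only [finmin, Fin.val_mk]
  have hk : k.1 ≤ 2 := Nat.lt_succ_iff.mp k.2
  rcases (by omega : k.1 = 0 ∨ k.1 = 1 ∨ k.1 = 2) with h|h|h <;> rw [h] <;> norm_num <;> omega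

lemma I2_val (p q : ℕ) (k : Fin (p+2)) :
    ((I2 p q).toOrderHom k : ℕ) = if k.1 ≤ p then k.1 else p + q := by
  rw [show ((I2 p q).toOrderHom k : ℕ) = glueV 1 q p (longMap q) k.1 from rfl]
  unfold glueV
  rw [longMap_val]
  simp only [finmin, Fin.val_mk]
  have hk : k.1 ≤ p + 1 := Nat.lt_succ_iff.mp k.2
  rcases le_or_gt k.1 p with h | h
  · rw [if_pos h, if_pos h]
  · have h1 : k.1 = p + 1 := by omega
    rw [if_neg (by omega), if_pos (by omega), if_neg (by omega), h1]
    norm_num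

lemma id_a (p q : ℕ) :
    iota p (n := p+1) 0 (by omega) ≫ I2 p q = iota p (n := p+q) 0 (by omega) := by
  apply homext; intro k
  rw [comp_val, I2_val, iota_val, iota_val]
  have hk : k.1 ≤ p := Nat.lt_succ_iff.mp k.2
  split_ifs <;> omega

lemma id_A (p q : ℕ) (k : Fin 3) :
    ((I1 p ≫ I2 p q).toOrderHom k : ℕ) =
      if k.1 = 0 then 0 else if k.1 = 1 then p else p + q := by
  rw [comp_val, I2_val, I1_val]
  have hk : k.1 ≤ 2 := Nat.lt_succ_iff.mp k.2
  split_ifs <;> omega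

lemma id_b (p q : ℕ) :
    rho (0 : Fin 2) ≫ (I1 p ≫ I2 p q) = longMap p ≫ iota p (n := p+q) 0 (by omega) := by
  apply homext; intro k
  rw [comp_val, id_A, comp_val, iota_val, longMap_val, rho_val]
  have hk : k.1 ≤ 1 := Nat.lt_succ_iff.mp k.2
  rcases (by omega : k.1 = 0 ∨ k.1 = 1) with h|h <;> rw [h] <;> norm_num

lemma id_c (p q : ℕ) :
    rho (1 : Fin 2) ≫ (I1 p ≫ I2 p q) = longMap q ≫ iota q (n := p+q) p (by omega) := by
  apply homext; intro k
  rw [comp_val, id_A, comp_val, iota_val, longMap_val, rho_val]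
  have hk : k.1 ≤ 1 := Nat.lt_succ_iff.mp k.2
  rcases (by omega : k.1 = 0 ∨ k.1 = 1) with h|h <;> rw [h] <;> norm_num

lemma id_d (p q : ℕ) :
    rho (1 : Fin 2) ≫ I1 p = iota 1 (n := p+1) p (by omega) := by
  apply homext; intro k
  rw [comp_val, I1_val, iota_val, rho_val]
  have hk : k.1 ≤ 1 := Nat.lt_succ_iff.mp k.2
  rcases (by omega : k.1 = 0 ∨ k.1 = 1) with h|h <;> rw [h] <;> norm_num

lemma id_e (p q : ℕ) :
    longMap 2 ≫ (I1 p ≫ I2 p q) = longMap (p+q) := by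
  apply homext; intro k
  rw [comp_val, id_A, longMap_val, longMap_val]
  have hk : k.1 ≤ 1 := Nat.lt_succ_iff.mp k.2
  rcases (by omega : k.1 = 0 ∨ k.1 = 1) with h|h <;> rw [h] <;> norm_num

lemma id_f (p : ℕ) : rho (0 : Fin 2) = iota 1 (n := 2) 0 (by omega) := by
  apply homext; intro k
  rw [rho_val, iota_val]
  norm_num

-- ### the comparison map

def Fmap (X : SSet) (hD : DecompositionSpace X) (p q : ℕ) :
    Phi X (p+q) → Conv2 X (phiEdge X p) (phiEdge X q) := fun ω =>
  ⟨(X.map (I1 p ≫ I2 p q).op ω.1,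
    ⟨X.map (iota p (n := p+q) 0 (by omega)).op ω.1, (nondeg_restrict X hD p q ω.1 ω.2).1⟩,
    ⟨X.map (iota q (n := p+q) p (by omega)).op ω.1, (nondeg_restrict X hD p q ω.1 ω.2).2⟩),
   by
    constructor
    · show X.map (longMap p).op (X.map (iota p (n := p+q) 0 (by omega)).op ω.1) =
        X.map (rho (0 : Fin 2)).op (X.map (I1 p ≫ I2 p q).op ω.1)
      rw [← map_comp_apply, ← map_comp_apply, id_b]
    · show X.map (longMap q).op (X.map (iota q (n := p+q) p (by omega)).op ω.1) =
        X.map (rho (1 : Fin 2)).op (X.map (I1 p ≫ I2 p q).op ω.1)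
      rw [← map_comp_apply, ← map_comp_apply, id_c]⟩


/-- `Φ_p * Φ_q ≅ Φ_{p+q}`: for a complete decomposition space, the convolution
of the functionals `Φ_p` and `Φ_q` is in bijection with `Φ_{p+q}`, over `X₁`. -/
theorem phi_convolution_equiv (X : SSet) (hC : CompleteS X)
    (hD : DecompositionSpace X) (p q : ℕ) :
    ∃ e : Conv2 X (phiEdge X p) (phiEdge X q) ≃ Phi X (p + q),
      ∀ t, phiEdge X (p + q) (e t) = conv2Edge X t := by
  classical
  have PB1 := hD (longMap p) (iota 1 (n := 2) 0 (by omega)) (iota p (n := p+1) 0 (by omega))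
      (I1 p) (longMap_active p) (iota_inert _ _ _)
      (glue_isPushout 1 p 0 (by omega) (by omega) _ (longMap_active p))
  have PB2 := hD (longMap q) (iota 1 (n := p+1) p (by omega)) (iota q (n := p+q) p (by omega))
      (I2 p q) (longMap_active q) (iota_inert _ _ _)
      (glue_isPushout 1 q p (by omega) (by omega) _ (longMap_active q))
  have hinj : Function.Injective (Fmap X hD p q) := by
    intro ω ω' hFF
    have h1 : X.map (I1 p ≫ I2 p q).op ω.1 = X.map (I1 p ≫ I2 p q).op ω'.1 :=
      congrArg (fun t => t.1.1) hFF
    have h2 : X.map (iota p (n := p+q) 0 (by omega)).op ω.1 =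
        X.map (iota p (n := p+q) 0 (by omega)).op ω'.1 :=
      congrArg (fun t => t.1.2.1.1) hFF
    have h3 : X.map (iota q (n := p+q) p (by omega)).op ω.1 =
        X.map (iota q (n := p+q) p (by omega)).op ω'.1 :=
      congrArg (fun t => t.1.2.2.1) hFF
    obtain ⟨c, -, hu⟩ := PB1.2
      (X.map (iota p (n := p+1) 0 (by omega)).op (X.map (I2 p q).op ω.1))
      (X.map (I1 p).op (X.map (I2 p q).op ω.1))
      (PB1.1 (X.map (I2 p q).op ω.1))
    have eτ : X.map (I2 p q).op ω'.1 = X.map (I2 p q).op ω.1 := by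
      have g1 : X.map (iota p (n := p+1) 0 (by omega)).op (X.map (I2 p q).op ω'.1) =
          X.map (iota p (n := p+1) 0 (by omega)).op (X.map (I2 p q).op ω.1) := by
        rw [← map_comp_apply, ← map_comp_apply, id_a, h2]
      have g2 : X.map (I1 p).op (X.map (I2 p q).op ω'.1) =
          X.map (I1 p).op (X.map (I2 p q).op ω.1) := by
        rw [← map_comp_apply, ← map_comp_apply, h1]
      rw [hu _ ⟨g1, g2⟩, hu _ ⟨rfl, rfl⟩]
    obtain ⟨c2, -, hu2⟩ := PB2.2
      (X.map (iota q (n := p+q) p (by omega)).op ω.1)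
      (X.map (I2 p q).op ω.1)
      (PB2.1 ω.1)
    apply Subtype.ext
    rw [hu2 ω.1 ⟨rfl, rfl⟩, hu2 ω'.1 ⟨h3.symm, eτ⟩]
  have hsurj : Function.Surjective (Fmap X hD p q) := by
    rintro ⟨⟨σ, a, b⟩, hta, htb⟩
    have cond1 : X.map (longMap p).op a.1 = X.map (iota 1 (n := 2) 0 (by omega)).op σ := by
      rw [← id_f p]; exact hta
    obtain ⟨τ, ⟨hτ1, hτ2⟩, -⟩ := PB1.2 a.1 σ cond1
    have cond2 : X.map (longMap q).op b.1 =
        X.map (iota 1 (n := p+1) p (by omega)).op τ := by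
      rw [← id_d p q, map_comp_apply, hτ2]
      exact htb
    obtain ⟨w, ⟨hw1, hw2⟩, -⟩ := PB2.2 b.1 τ cond2
    have hra : X.map (iota p (n := p+q) 0 (by omega)).op w = a.1 := by
      rw [← id_a p q, map_comp_apply, hw2, hτ1]
    have hndw : Nondeg X (p+q) w := by
      apply nondeg_of_restrict X p q w
      · rw [hra]; exact a.2
      · rw [hw1]; exact b.2
    refine ⟨⟨w, hndw⟩, ?_⟩
    apply Subtype.ext
    have hσ : X.map (I1 p ≫ I2 p q).op w = σ := by rw [map_comp_apply, hw2, hτ2]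
    exact Prod.ext hσ (Prod.ext (Subtype.ext hra) (Subtype.ext hw1))
  refine ⟨(Equiv.ofBijective (Fmap X hD p q) ⟨hinj, hsurj⟩).symm, fun t => ?_⟩
  have hFe : Fmap X hD p q ((Equiv.ofBijective (Fmap X hD p q) ⟨hinj, hsurj⟩).symm t) = t :=
    (Equiv.ofBijective (Fmap X hD p q) ⟨hinj, hsurj⟩).apply_symm_apply t
  have hσ : t.1.1 =
      X.map (I1 p ≫ I2 p q).op ((Equiv.ofBijective (Fmap X hD p q) ⟨hinj, hsurj⟩).symm t).1 :=
    congrArg (fun s => s.1.1) hFe.symm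
  show X.map (longMap (p+q)).op _ = X.map (longMap 2).op t.1.1
  rw [hσ, ← map_comp_apply, id_e]


end Crapo
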